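/- arXiv:1403.7571 — 4 statements merged into one kernel-verified Lean document; each statement's English description precedes it below -/
import Mathlib

section
/- Let A be an m×m matrix over ℤ[q,q⁻¹], p a prime number, and suppose l ∈ ℤ[q,q⁻¹]^m can be written as l = (1−q)x + p·y for vectors x, y over ℤ[q,q⁻¹]. Then lᵀ^* A l ≠ 1 − q. (Consequently, if lᵀ^* A l = 1−q, the integer vector l(1) is primitive, i.e. the gcd of its entries is 1.) -/
/-!
Expanding `lᵀ^* A l` sesquilinearly and using `(1 - q⁻¹)(1 - q) = -q⁻¹(1 - q)²` puts it in the
ideal `(p, (1 - q)²)`. Evaluation at `q = 1 + ε` in the dual numbers over `ℤ/p`, which records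
the value and the derivative at `q = 1` modulo `p`, kills this ideal but sends `1 - q` to `-ε ≠ 0`.
-/

open LaurentPolynomial Matrix

/-- The sesquilinear pairing `h₀ᵀ^* A h₁`, where `^*` is `q ↦ q⁻¹`. -/
noncomputable def pairL {m : ℕ} (A : Matrix (Fin m) (Fin m) (LaurentPolynomial ℤ))
    (h₀ h₁ : Fin m → LaurentPolynomial ℤ) : LaurentPolynomial ℤ :=
  dotProduct (fun i => invert (h₀ i)) (A.mulVec h₁)

open DualNumber

section Sesquilinear

variable {m : ℕ} (A : Matrix (Fin m) (Fin m) ℤ[T;T⁻¹])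

lemma pairL_add_left (h₀ h₀' h₁ : Fin m → ℤ[T;T⁻¹]) :
    pairL A (h₀ + h₀') h₁ = pairL A h₀ h₁ + pairL A h₀' h₁ := by
  simp only [pairL, Pi.add_apply, map_add]
  exact add_dotProduct _ _ _

lemma pairL_add_right (h₀ h₁ h₁' : Fin m → ℤ[T;T⁻¹]) :
    pairL A h₀ (h₁ + h₁') = pairL A h₀ h₁ + pairL A h₀ h₁' := by
  simp only [pairL, mulVec_add, dotProduct_add]

lemma pairL_smul_left (c : ℤ[T;T⁻¹]) (h₀ h₁ : Fin m → ℤ[T;T⁻¹]) :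
    pairL A (c • h₀) h₁ = invert c * pairL A h₀ h₁ := by
  simp only [pairL, Pi.smul_apply, smul_eq_mul, map_mul]
  exact smul_dotProduct (invert c) _ _

lemma pairL_smul_right (c : ℤ[T;T⁻¹]) (h₀ h₁ : Fin m → ℤ[T;T⁻¹]) :
    pairL A h₀ (c • h₁) = c * pairL A h₀ h₁ := by
  simp only [pairL, mulVec_smul, dotProduct_smul, smul_eq_mul]

lemma pairL_smul_add_smul (c d : ℤ[T;T⁻¹]) (x y : Fin m → ℤ[T;T⁻¹]) :
    pairL A (c • x + d • y) (c • x + d • y) =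
      invert c * c * pairL A x x + invert c * d * pairL A x y
        + invert d * c * pairL A y x + invert d * d * pairL A y y := by
  simp only [pairL_add_left, pairL_add_right, pairL_smul_left, pairL_smul_right]
  ring

end Sesquilinear

lemma invert_one_sub_T_one_mul (R : Type*) [CommRing R] :
    invert (1 - T 1 : R[T;T⁻¹]) * (1 - T 1) = -T (-1) * (1 - T 1) ^ 2 := by
  have hT : (T (-1) * T 1 : R[T;T⁻¹]) = 1 := by rw [← T_add, neg_add_cancel, T_zero]
  rw [map_sub, map_one, invert_T]
  linear_combination (T 1 - 1) * hT

lemma pairL_mem_span_natCast_one_sub_T_sq {m : ℕ} (A : Matrix (Fin m) (Fin m) ℤ[T;T⁻¹])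
    (n : ℕ) (x y l : Fin m → ℤ[T;T⁻¹])
    (hl : ∀ i, l i = (1 - T 1) * x i + (n : ℤ[T;T⁻¹]) * y i) :
    pairL A l l ∈ Ideal.span {(n : ℤ[T;T⁻¹]), (1 - T 1) ^ 2} := by
  have hl' : l = (1 - T 1 : ℤ[T;T⁻¹]) • x + (n : ℤ[T;T⁻¹]) • y := funext hl
  set I := Ideal.span {(n : ℤ[T;T⁻¹]), (1 - T 1) ^ 2}
  have hn : (n : ℤ[T;T⁻¹]) ∈ I := Ideal.subset_span (by simp)
  have hsq : (1 - T 1 : ℤ[T;T⁻¹]) ^ 2 ∈ I := Ideal.subset_span (by simp)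
  rw [hl', pairL_smul_add_smul, map_natCast, invert_one_sub_T_one_mul]
  refine add_mem (add_mem (add_mem ?_ ?_) ?_) ?_
  · exact Ideal.mul_mem_right _ _ (Ideal.mul_mem_left _ _ hsq)
  · exact Ideal.mul_mem_right _ _ (Ideal.mul_mem_left _ _ hn)
  · exact Ideal.mul_mem_right _ _ (Ideal.mul_mem_right _ _ hn)
  · exact Ideal.mul_mem_right _ _ (Ideal.mul_mem_right _ _ hn)

def DualNumber.oneAddEpsUnit (R : Type*) [CommRing R] : R[ε]ˣ where
  val := 1 + ε
  inv := 1 - ε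
  val_inv := by linear_combination (-1 : R[ε]) * eps_mul_eps (R := R)
  inv_val := by linear_combination (-1 : R[ε]) * eps_mul_eps (R := R)

lemma one_sub_T_one_notMem_span_natCast_one_sub_T_sq {n : ℕ} (hn : n ≠ 1) :
    (1 - T 1 : ℤ[T;T⁻¹]) ∉ Ideal.span {(n : ℤ[T;T⁻¹]), (1 - T 1) ^ 2} := by
  let φ := LaurentPolynomial.eval₂ (Int.castRingHom (ZMod n)[ε]) (oneAddEpsUnit (ZMod n))
  have hφT : φ (1 - T 1) = -ε := by simp [φ, oneAddEpsUnit]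
  have hφn : φ n = 0 := by
    rw [map_natCast, ← TrivSqZeroExt.inl_natCast, ZMod.natCast_self, TrivSqZeroExt.inl_zero]
  have hker : Ideal.span {(n : ℤ[T;T⁻¹]), (1 - T 1) ^ 2} ≤ RingHom.ker φ := by
    rw [Ideal.span_le, Set.insert_subset_iff, Set.singleton_subset_iff]
    exact ⟨hφn, by simp [RingHom.mem_ker, hφT]⟩
  intro hmem
  have hε : (ε : (ZMod n)[ε]) = 0 := by simpa [hφT] using hker hmem
  exact hn (ZMod.one_eq_zero_iff.mp (by simpa using congrArg TrivSqZeroExt.snd hε))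

/-- If `l = (1-q)x + p·y` for a prime `p`, then `lᵀ^* A l ≠ 1 - q`. -/
theorem stmt2 {m : ℕ} (A : Matrix (Fin m) (Fin m) (LaurentPolynomial ℤ))
    (p : ℕ) (hp : Nat.Prime p)
    (x y l : Fin m → LaurentPolynomial ℤ)
    (hl : ∀ i, l i = (1 - T 1) * x i + (p : LaurentPolynomial ℤ) * y i) :
    pairL A l l ≠ 1 - T 1 := by
  intro h
  have hmem := pairL_mem_span_natCast_one_sub_T_sq A p x y l hl
  rw [h] at hmem
  exact one_sub_T_one_notMem_span_natCast_one_sub_T_sq hp.ne_one hmem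
end

section
/- Fix n ∈ ℤ and coprime integers 0 < a < b, m = a+b. Let B be the cyclic band matrix over ℤ[q,q⁻¹] of the previous context (entries B_{ij} = q(−1)ⁿ, 1+q(−1)ⁿ, 1−q(−1)ⁿ, −1−q(−1)ⁿ, −1, or 0 according to i−j mod m), and let A be the unit upper triangular matrix with A_{ij} = B_{ij} for i < j. Then for h = (1,…,1) and any f ∈ ℤ[q,q⁻¹], one has (f h)ᵀ^* A (f h) = f^* f · ab · (1 + q(−1)ⁿ), where f^* = f(q⁻¹) and ᵀ^* denotes conjugate transpose. -/
open LaurentPolynomial Matrix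

/-- `(-1)ⁿ` for `n : ℤ`, as a Laurent polynomial. -/
noncomputable def sgn (n : ℤ) : LaurentPolynomial ℤ :=
  (((-1 : (LaurentPolynomial ℤ)ˣ) ^ n : (LaurentPolynomial ℤ)ˣ) : LaurentPolynomial ℤ)

/-- The entry of the cyclic band matrix of Example 1.6, as a function of the
difference `d = i - j ∈ ℤ/m`. -/
noncomputable def bandEntry (n : ℤ) (m a : ℕ) (d : ZMod m) : LaurentPolynomial ℤ :=
  if d = -(a : ZMod m) then T 1 * sgn n
  else if ∃ t ∈ Finset.Ico 1 a, d = -(t : ZMod m) then 1 + T 1 * sgn n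
  else if d = 0 then 1 - T 1 * sgn n
  else if ∃ t ∈ Finset.Ico 1 a, d = (t : ZMod m) then -1 - T 1 * sgn n
  else if d = (a : ZMod m) then -1
  else 0

/-!
The pairing of two constant vectors is `f^* g` times the sum of all entries of `A`. Since `A` is
constant along superdiagonals, that sum is `∑_{d < a+b} (a + b - d) · A₀d`. The entry `A₀d` is `1`
at `d = 0`, `1 + q(-1)ⁿ` for `0 < d < a`, `q(-1)ⁿ` at `d = a`, `-1` at `d = b`,
`-1 - q(-1)ⁿ` for `b < d < a + b` and `0` otherwise. The blocks `0 < d < a` and `b < d < a + b`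
have equal length and their weights differ by `b`, so together they give `(a - 1) b (1 + q(-1)ⁿ)`;
the entries at `0`, `a` and `b` add the remaining `b (1 + q(-1)ⁿ)`.
-/

open Finset

theorem Finset.sum_range_sum_range_ite_le {M : Type*} [AddCommMonoid M] (g : ℕ → M) (m : ℕ) :
    ∑ i ∈ range m, ∑ j ∈ range m, (if i ≤ j then g (j - i) else 0) =
      ∑ d ∈ range m, (m - d) • g d := by
  have inner : ∀ j ∈ range m, ∑ i ∈ range m, (if i ≤ j then g (j - i) else 0) =
      ∑ d ∈ Ico 0 (j + 1), g d := by
    intro j hj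
    have : (range m).filter (· ≤ j) = range (j + 1) := by
      ext i; simp only [mem_filter, mem_range] at hj ⊢; omega
    rw [← sum_filter, this, ← range_eq_Ico]
    simpa using sum_range_reflect g (j + 1)
  rw [sum_comm, sum_congr rfl inner, range_eq_Ico, ← sum_Ico_Ico_comm]
  simp only [sum_const, Nat.card_Ico]

theorem ZMod.natCast_eq_natCast_iff_of_lt {m u v : ℕ} (hu : u < m) (hv : v < m) :
    (u : ZMod m) = v ↔ u = v := by
  rw [ZMod.natCast_eq_natCast_iff', Nat.mod_eq_of_lt hu, Nat.mod_eq_of_lt hv]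

theorem ZMod.neg_natCast_eq_natCast_sub {m d : ℕ} (h : d ≤ m) :
    -(d : ZMod m) = ((m - d : ℕ) : ZMod m) := by
  rw [neg_eq_iff_add_eq_zero, ← Nat.cast_add, Nat.add_sub_cancel' h, ZMod.natCast_self]

theorem bandEntry_neg_natCast (n : ℤ) {m a d : ℕ} (ha : 0 < a) (ham : a < m) (hd : 0 < d)
    (hdm : d < m) :
    bandEntry n m a (-(d : ZMod m)) =
      if d = a then T 1 * sgn n
      else if d < a then 1 + T 1 * sgn n
      else if m < d + a then -1 - T 1 * sgn n
      else if d + a = m then -1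
      else 0 := by
  have cast_iff {u v : ℕ} (hu : u < m) (hv : v < m) := ZMod.natCast_eq_natCast_iff_of_lt hu hv
  have neg_d := ZMod.neg_natCast_eq_natCast_sub hdm.le
  have eq_neg_a : -(d : ZMod m) = -(a : ZMod m) ↔ d = a := by rw [neg_inj, cast_iff hdm ham]
  have eq_neg_low : (∃ t ∈ Ico 1 a, -(d : ZMod m) = -(t : ZMod m)) ↔ d < a := by
    simp only [neg_inj]
    constructor
    · rintro ⟨t, ht, h⟩
      rw [mem_Ico] at ht
      rw [cast_iff hdm (by omega)] at h
      omega
    · exact fun h => ⟨d, mem_Ico.2 ⟨hd, h⟩, rfl⟩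
  have ne_zero : -(d : ZMod m) ≠ 0 := by
    rw [neg_d, Ne, ← Nat.cast_zero, cast_iff (by omega) (by omega)]
    omega
  have eq_low : (∃ t ∈ Ico 1 a, -(d : ZMod m) = t) ↔ m < d + a := by
    rw [neg_d]
    constructor
    · rintro ⟨t, ht, h⟩
      rw [mem_Ico] at ht
      rw [cast_iff (by omega) (by omega)] at h
      omega
    · exact fun h => ⟨m - d, mem_Ico.2 ⟨by omega, by omega⟩, rfl⟩
  have eq_a : -(d : ZMod m) = a ↔ d + a = m := by
    rw [neg_d, cast_iff (by omega) ham]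
    omega
  simp only [bandEntry, eq_neg_a, eq_neg_low, ne_zero, eq_low, eq_a, if_false]

/-- The entry `A i (i + d)`: the unit diagonal replaces `B`'s `1 - q(-1)ⁿ`. -/
noncomputable def upperBandEntry (n : ℤ) (m a d : ℕ) : LaurentPolynomial ℤ :=
  if d = 0 then 1 else bandEntry n m a (-(d : ZMod m))

theorem sum_Ico_sub_eq_sum_Ico_sub_add (a b : ℕ) :
    ∑ d ∈ Ico 1 a, (a + b - d) = ∑ d ∈ Ico (b + 1) (a + b), (a + b - d) + (a - 1) * b := by
  rw [sum_Ico_eq_sum_range, sum_Ico_eq_sum_range, show a + b - (b + 1) = a - 1 by omega,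
    show (a - 1) * b = ∑ _k ∈ range (a - 1), b by simp, ← sum_add_distrib]
  exact sum_congr rfl fun k hk => by rw [mem_range] at hk; omega

theorem sum_range_sub_nsmul_upperBandEntry (n : ℤ) {a b : ℕ} (ha : 0 < a) (hab : a < b) :
    ∑ d ∈ range (a + b), (a + b - d) • upperBandEntry n (a + b) a d =
      (a * b : LaurentPolynomial ℤ) * (1 + T 1 * sgn n) := by
  set x := T 1 * sgn n
  set E := upperBandEntry n (a + b) a
  have entry (d : ℕ) (hd : 0 < d) (hdm : d < a + b) : E d =
      if d = a then x else if d < a then 1 + x else if a + b < d + a then -1 - x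
      else if d + a = a + b then -1 else 0 :=
    (if_neg hd.ne').trans (bandEntry_neg_natCast n ha (by omega) hd hdm)
  have low : ∀ d ∈ Ico 1 a, (a + b - d) • E d = (a + b - d) • (1 + x) := fun d hd => by
    rw [mem_Ico] at hd
    rw [entry d (by omega) (by omega), if_neg (by omega), if_pos hd.2]
  have mid : ∀ d ∈ Ico (a + 1) b, (a + b - d) • E d = 0 := fun d hd => by
    rw [mem_Ico] at hd
    rw [entry d (by omega) (by omega), if_neg (by omega), if_neg (by omega), if_neg (by omega),
      if_neg (by omega), smul_zero]
  have high : ∀ d ∈ Ico (b + 1) (a + b), (a + b - d) • E d = (a + b - d) • (-1 - x) :=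
    fun d hd => by
    rw [mem_Ico] at hd
    rw [entry d (by omega) (by omega), if_neg (by omega), if_neg (by omega), if_pos (by omega)]
  have at_a : E a = x := by rw [entry a ha (by omega), if_pos rfl]
  have at_b : E b = -1 := by
    rw [entry b (by omega) (by omega), if_neg (by omega), if_neg (by omega), if_neg (by omega),
      if_pos (by omega)]
  have at_zero : E 0 = 1 := if_pos rfl
  rw [range_eq_Ico, ← sum_Ico_consecutive _ (Nat.zero_le 1) (by omega : 1 ≤ a + b),
    ← sum_Ico_consecutive _ ha (by omega : a ≤ a + b),
    ← sum_Ico_consecutive _ (Nat.le_succ a) (by omega : a + 1 ≤ a + b),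
    ← sum_Ico_consecutive _ (by omega : a + 1 ≤ b) (by omega : b ≤ a + b),
    ← sum_Ico_consecutive _ (Nat.le_succ b) (by omega : b + 1 ≤ a + b),
    sum_congr rfl low, sum_congr rfl mid, sum_congr rfl high, ← sum_smul, ← sum_smul,
    sum_Ico_sub_eq_sum_Ico_sub_add]
  simp only [Nat.Ico_succ_singleton, sum_singleton, sum_const_zero, at_zero, at_a, at_b,
    Nat.sub_zero, Nat.add_sub_cancel_left, Nat.add_sub_cancel, nsmul_eq_mul]
  push_cast [Nat.cast_sub (Nat.succ_le_of_lt ha)]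
  ring

theorem pairL_const {m : ℕ} (A : Matrix (Fin m) (Fin m) (LaurentPolynomial ℤ))
    (f g : LaurentPolynomial ℤ) :
    pairL A (fun _ => f) (fun _ => g) = invert f * g * ∑ i, ∑ j, A i j := by
  simp only [pairL, dotProduct, mulVec, mul_sum]
  exact sum_congr rfl fun i _ => sum_congr rfl fun j _ => by ring

theorem unitUpper_bandMatrix_apply (n : ℤ) {m a : ℕ}
    {B A : Matrix (Fin m) (Fin m) (LaurentPolynomial ℤ)}
    (hB : ∀ i j : Fin m, B i j = bandEntry n m a ((i : ZMod m) - (j : ZMod m)))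
    (hA : ∀ i j : Fin m, A i j = if i < j then B i j else if i = j then 1 else 0) (i j : Fin m) :
    A i j = if (i : ℕ) ≤ j then upperBandEntry n m a (j - i) else 0 := by
  rw [hA]
  rcases lt_trichotomy i j with h | rfl | h
  · have hij : (i : ℕ) < j := h
    rw [if_pos h, if_pos hij.le, hB, upperBandEntry, if_neg (by omega), Nat.cast_sub hij.le,
      neg_sub]
  · simp [upperBandEntry]
  · have hji : (j : ℕ) < i := h
    rw [if_neg h.not_gt, if_neg h.ne', if_neg hji.not_ge]

theorem stmt7_general (n : ℤ) (a b : ℕ) (ha : 0 < a) (hab : a < b)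
    (B A : Matrix (Fin (a + b)) (Fin (a + b)) (LaurentPolynomial ℤ))
    (hB : ∀ i j : Fin (a + b),
      B i j = bandEntry n (a + b) a ((i : ZMod (a + b)) - (j : ZMod (a + b))))
    (hA : ∀ i j : Fin (a + b),
      A i j = if i < j then B i j else if i = j then 1 else 0)
    (f : LaurentPolynomial ℤ) :
    pairL A (fun _ => f) (fun _ => f) =
      invert f * f * ((a : LaurentPolynomial ℤ) * (b : LaurentPolynomial ℤ)) *
        (1 + T 1 * sgn n) := by
  have entry_sum : ∑ i, ∑ j, A i j =
      ∑ i ∈ range (a + b), ∑ j ∈ range (a + b),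
        if i ≤ j then upperBandEntry n (a + b) a (j - i) else 0 := by
    simp only [unitUpper_bandMatrix_apply n hB hA]
    rw [← Fin.sum_univ_eq_sum_range]
    exact sum_congr rfl fun i _ =>
      Fin.sum_univ_eq_sum_range (fun j => if i ≤ j then upperBandEntry n (a + b) a (j - i) else 0) _
  rw [pairL_const, entry_sum, sum_range_sum_range_ite_le,
    sum_range_sub_nsmul_upperBandEntry n ha hab, mul_assoc (invert f * f)]

/-- For the cyclic band matrix `B` and its unit upper triangular part `A`,
and `h = (1,…,1)`, one has `(f h)ᵀ^* A (f h) = f^* f · ab · (1 + q(−1)ⁿ)`. -/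
theorem stmt7 (n : ℤ) (a b : ℕ) (ha : 0 < a) (hab : a < b) (hcop : Nat.Coprime a b)
    (B A : Matrix (Fin (a + b)) (Fin (a + b)) (LaurentPolynomial ℤ))
    (hB : ∀ i j : Fin (a + b),
      B i j = bandEntry n (a + b) a ((i : ZMod (a + b)) - (j : ZMod (a + b))))
    (hA : ∀ i j : Fin (a + b),
      A i j = if i < j then B i j else if i = j then 1 else 0)
    (f : LaurentPolynomial ℤ) :
    pairL A (fun _ => f) (fun _ => f) =
      invert f * f * ((a : LaurentPolynomial ℤ) * (b : LaurentPolynomial ℤ)) *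
        (1 + T 1 * sgn n) :=
  stmt7_general n a b ha hab B A hB hA f
end

section
/- Fix n ∈ ℤ, ε = (−1)ⁿ. Consider the cyclic q-intersection data on ℤ[q,q⁻¹]^{a+b} given by σ(i,j) for i,j ∈ ℤ/(a+b): σ(i,i) = 1 − qε, σ(i, i−1) = −1, σ(i, i+1) = qε, and σ(i,j) = 0 otherwise (a matrix S with S_{ij} = σ(i,j)). For coprime 0 < a < b and each i ∈ ℤ/(a+b), define v^i = Σ_{s=0}^{a−1} e^{i+s} as a formal sum of basis vectors, and set B_{ij} = Σ_{s=0}^{a−1} Σ_{t=0}^{a−1} σ(i+s, j+t). Then B_{ij} depends only on i−j mod (a+b) and equals: qε if i−j ≡ −a; 1+qε if i−j ≡ −a+1,…,−1; 1−qε if i=j; −1−qε if i−j ≡ 1,…,a−1; −1 if i−j ≡ a; and 0 otherwise. -/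
/-!
Write `g = δ₀ + qε·δ₋₁` on `ℤ/(a+b)`. Then `σ(d) = g(d) − g(d − 1)`, so for fixed `s` the sum over
`t` telescopes and `B` at `d = i − j` becomes `Σ_{s<a} (g(d + s) − g(d + s − a))`, i.e. a count of how
often the windows `d, …, d + a − 1` and `d − a, …, d − 1` meet `0` and `−1`. Lifting `d` to an integer
`k ∈ [−a, b)`, every residue involved is represented by an integer of absolute value less than
`a + b` (as `2a < a + b`), so these counts and the case distinctions of the band matrix can all be
read off in `ℤ`.
-/

open LaurentPolynomial Matrix

/-- The cyclic q-intersection pairing `σ(i,j)` of the spheres `Σⁱ`, as a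
function of `d = i − j ∈ ℤ/m`: `1 − qε` if `d = 0`, `−1` if `d = 1`,
`qε` if `d = −1`, and `0` otherwise. -/
noncomputable def sigEntry (n : ℤ) (m : ℕ) (d : ZMod m) : LaurentPolynomial ℤ :=
  if d = 0 then 1 - T 1 * sgn n
  else if d = 1 then -1
  else if d = -1 then T 1 * sgn n
  else 0

theorem ZMod.intCast_eq_zero_iff_of_abs_lt {m : ℕ} {u : ℤ} (h : |u| < m) :
    (u : ZMod m) = 0 ↔ u = 0 := by
  refine ⟨fun hu => Int.eq_zero_of_abs_lt_dvd ((ZMod.intCast_zmod_eq_zero_iff_dvd u m).1 hu) h,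
    fun hu => by rw [hu, Int.cast_zero]⟩

theorem ZMod.intCast_eq_intCast_iff_of_abs_sub_lt {m : ℕ} {u v : ℤ} (h : |u - v| < m) :
    (u : ZMod m) = v ↔ u = v := by
  rw [← sub_eq_zero, ← Int.cast_sub, ZMod.intCast_eq_zero_iff_of_abs_lt h, sub_eq_zero]

theorem ZMod.exists_intCast_eq_of_le_lt {m : ℕ} [NeZero m] (d : ZMod m) (lo : ℤ) :
    ∃ k : ℤ, lo ≤ k ∧ k < lo + m ∧ (k : ZMod m) = d := by
  refine ⟨lo + (d - (lo : ZMod m)).val, by omega,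
    by have := ZMod.val_lt (d - (lo : ZMod m)); omega, ?_⟩
  push_cast
  rw [ZMod.natCast_zmod_val]
  ring

theorem Finset.sum_range_sub_natCast {R M : Type*} [Ring R] [AddCommGroup M] (f : R → M)
    (x : R) (a : ℕ) :
    ∑ t ∈ Finset.range a, (f (x - t) - f (x - t - 1)) = f x - f (x - a) := by
  have := Finset.sum_range_sub' (fun t : ℕ => f (x - t)) a
  simpa [sub_sub] using this

theorem sum_range_ite_add_eq_zero {M : Type*} [AddCommMonoidWithOne M] (k : ℤ) (a : ℕ) :
    ∑ s ∈ Finset.range a, (if k + s = 0 then (1 : M) else 0) =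
      if -a < k ∧ k ≤ 0 then 1 else 0 := by
  induction a with
  | zero => simp
  | succ a ih =>
    rw [Finset.sum_range_succ, ih]
    split_ifs <;> first | omega | simp

noncomputable def sigPrimitive (n : ℤ) (m : ℕ) (d : ZMod m) : LaurentPolynomial ℤ :=
  (if d = 0 then 1 else 0) + T 1 * sgn n * (if d + 1 = 0 then 1 else 0)

theorem sigEntry_eq_sub (n : ℤ) {m : ℕ} (hm : 3 ≤ m) (d : ZMod m) :
    sigEntry n m d = sigPrimitive n m d - sigPrimitive n m (d - 1) := by
  have h1 : (1 : ZMod m) ≠ 0 := by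
    simpa using (ZMod.intCast_eq_zero_iff_of_abs_lt (m := m) (u := 1) (by simp; omega)).not
  have h2 : (2 : ZMod m) ≠ 0 := by
    simpa using (ZMod.intCast_eq_zero_iff_of_abs_lt (m := m) (u := 2) (by simp; omega)).not
  unfold sigEntry sigPrimitive
  split_ifs <;> grind

theorem sum_sum_sigEntry_eq (n : ℤ) {m : ℕ} (hm : 3 ≤ m) (a : ℕ) (i j : ZMod m) :
    ∑ s ∈ Finset.range a, ∑ t ∈ Finset.range a, sigEntry n m ((i + s) - (j + t)) =
      ∑ s ∈ Finset.range a, (sigPrimitive n m (i - j + s) - sigPrimitive n m (i - j - a + s)) := by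
  refine Finset.sum_congr rfl fun s _ => ?_
  simp_rw [sigEntry_eq_sub n hm]
  convert Finset.sum_range_sub_natCast (sigPrimitive n m) (i - j + s) a using 3 <;> ring_nf

noncomputable def windowWeight (n : ℤ) (a : ℕ) (k : ℤ) : LaurentPolynomial ℤ :=
  (if -a < k ∧ k ≤ 0 then 1 else 0) + T 1 * sgn n * (if -a < k + 1 ∧ k + 1 ≤ 0 then 1 else 0)

theorem sum_range_sigPrimitive_eq_windowWeight (n : ℤ) {m : ℕ} (a : ℕ) {x : ZMod m} {k : ℤ}
    (hx : (k : ZMod m) = x) (hk₁ : -m < k) (hk₂ : k + a < m) :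
    ∑ s ∈ Finset.range a, sigPrimitive n m (x + s) = windowWeight n a k := by
  have term (s : ℕ) (hs : s ∈ Finset.range a) : sigPrimitive n m (x + s) =
      (if k + s = 0 then 1 else 0) + T 1 * sgn n * (if k + 1 + s = 0 then 1 else 0) := by
    have hs := Finset.mem_range.1 hs
    have h₀ : x + s = 0 ↔ k + s = 0 := by
      rw [← ZMod.intCast_eq_zero_iff_of_abs_lt (m := m) (abs_lt.2 ⟨by omega, by omega⟩), ← hx]
      push_cast; rfl
    have h₁ : x + s + 1 = 0 ↔ k + 1 + s = 0 := by
      rw [← ZMod.intCast_eq_zero_iff_of_abs_lt (m := m) (abs_lt.2 ⟨by omega, by omega⟩), ← hx]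
      push_cast; ring_nf
    simp only [sigPrimitive, h₀, h₁]
  rw [Finset.sum_congr rfl term, Finset.sum_add_distrib, ← Finset.mul_sum,
    sum_range_ite_add_eq_zero, sum_range_ite_add_eq_zero, windowWeight]

theorem bandEntry_intCast_eq_windowWeight_sub (n : ℤ) {m a : ℕ} (ha : 0 < a) (hm : 2 * a < m)
    {k : ℤ} (hk₁ : -a ≤ k) (hk₂ : k < m - a) :
    bandEntry n m a k = windowWeight n a k - windowWeight n a (k - a) := by
  have cast_eq_iff {v : ℤ} (hv₁ : -a ≤ v) (hv₂ : v ≤ a) : (k : ZMod m) = v ↔ k = v :=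
    ZMod.intCast_eq_intCast_iff_of_abs_sub_lt (abs_lt.2 ⟨by omega, by omega⟩)
  have h_neg_a : (k : ZMod m) = -(a : ZMod m) ↔ k = -a := by
    simpa using cast_eq_iff (v := -a) le_rfl (by omega)
  have h_zero : (k : ZMod m) = 0 ↔ k = 0 := by
    simpa using cast_eq_iff (v := 0) (by omega) (by omega)
  have h_a : (k : ZMod m) = (a : ZMod m) ↔ k = a := by
    simpa using cast_eq_iff (v := a) (by omega) le_rfl
  have h_neg_Ico : (∃ t ∈ Finset.Ico 1 a, (k : ZMod m) = -(t : ZMod m)) ↔ -a < k ∧ k < 0 := by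
    constructor
    · rintro ⟨t, ht, h⟩
      rw [Finset.mem_Ico] at ht
      have := (cast_eq_iff (v := -t) (by omega) (by omega)).1 (by simpa using h)
      omega
    · intro hk
      obtain ⟨t, rfl⟩ : ∃ t : ℕ, k = -t := ⟨(-k).toNat, by omega⟩
      exact ⟨t, Finset.mem_Ico.2 ⟨by omega, by omega⟩, by push_cast; rfl⟩
  have h_Ico : (∃ t ∈ Finset.Ico 1 a, (k : ZMod m) = (t : ZMod m)) ↔ 0 < k ∧ k < a := by
    constructor
    · rintro ⟨t, ht, h⟩
      rw [Finset.mem_Ico] at ht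
      have := (cast_eq_iff (v := t) (by omega) (by omega)).1 (by simpa using h)
      omega
    · intro hk
      obtain ⟨t, rfl⟩ : ∃ t : ℕ, k = t := ⟨k.toNat, by omega⟩
      exact ⟨t, Finset.mem_Ico.2 ⟨by omega, by omega⟩, by push_cast; rfl⟩
  simp only [bandEntry, windowWeight, h_neg_a, h_neg_Ico, h_zero, h_Ico, h_a]
  split_ifs <;> first | ring1 | omega

theorem stmt12_general (n : ℤ) (a b : ℕ) (ha : 0 < a) (hab : a < b) :
    ∀ i j : ZMod (a + b),
      (∑ s ∈ Finset.range a, ∑ t ∈ Finset.range a,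
        sigEntry n (a + b) ((i + (s : ZMod (a + b))) - (j + (t : ZMod (a + b))))) =
      bandEntry n (a + b) a (i - j) := by
  intro i j
  have : NeZero (a + b) := ⟨by omega⟩
  obtain ⟨k, hk₁, hk₂, hk⟩ := ZMod.exists_intCast_eq_of_le_lt (i - j) (-a)
  rw [sum_sum_sigEntry_eq n (by omega), Finset.sum_sub_distrib,
    sum_range_sigPrimitive_eq_windowWeight n a hk (by omega) (by omega),
    sum_range_sigPrimitive_eq_windowWeight n a (k := k - a) (by push_cast; rw [hk]) (by omega)
      (by omega),
    ← hk, bandEntry_intCast_eq_windowWeight_sub n ha (by omega) hk₁ (by omega)]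

/-- The double sum `B_{ij} = Σ_{s,t < a} σ(i+s, j+t)` depends only on `i − j`
mod `a+b` and equals the cyclic band matrix entry. -/
theorem stmt12 (n : ℤ) (a b : ℕ) (ha : 0 < a) (hab : a < b) (hcop : Nat.Coprime a b) :
    ∀ i j : ZMod (a + b),
      (∑ s ∈ Finset.range a, ∑ t ∈ Finset.range a,
        sigEntry n (a + b) ((i + (s : ZMod (a + b))) - (j + (t : ZMod (a + b))))) =
      bandEntry n (a + b) a (i - j) :=
  stmt12_general n a b ha hab
end

section
/- Fix n ∈ ℤ and ε = (−1)ⁿ. Let B_q be the 3×3 matrix over ℤ[q,q⁻¹] of Example 1.12: B_q = [[1−qε, −q⁻¹ε−1−εq, 1+qε+q²], [1+qε+q², 1−qε, −1−qε−q²], [−q⁻¹ε−1−εq, 1+q⁻¹ε+qε, 1−qε]]. Then for every nonzero vector l ∈ ℤ[q,q⁻¹]³, B_q l ≠ 0; i.e. B_q has trivial kernel over ℤ[q,q⁻¹]. -/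
/-!
If `B_q l = 0` then `det(B_q) • l = adj(B_q) (B_q l) = 0`, so over the domain `ℤ[q,q⁻¹]` it
suffices that `det(B_q) ≠ 0`. Using only `ε² = 1`, the value of `det(B_q)` at `q = 2` is
`45 (2ε - 1) / 4`, which cannot vanish because `ε = ±1`.
-/

open LaurentPolynomial Matrix

theorem sgn_sq (n : ℤ) : sgn n ^ 2 = 1 := by
  rw [sgn, ← Units.val_pow_eq_pow_val, ← zpow_natCast, ← _root_.zpow_mul, mul_comm,
    _root_.zpow_mul]
  norm_num

noncomputable def qIntersectionMatrix (ε : LaurentPolynomial ℤ) :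
    Matrix (Fin 3) (Fin 3) (LaurentPolynomial ℤ) :=
  of ![![1 - T 1 * ε, -(T (-1)) * ε - 1 - ε * T 1, 1 + T 1 * ε + T 2],
      ![1 + T 1 * ε + T 2, 1 - T 1 * ε, -1 - T 1 * ε - T 2],
      ![-(T (-1)) * ε - 1 - ε * T 1, 1 + T (-1) * ε + T 1 * ε, 1 - T 1 * ε]]

noncomputable abbrev evalTwo : LaurentPolynomial ℤ →+* ℚ :=
  eval₂ (Int.castRingHom ℚ) (Units.mk0 2 two_ne_zero)

theorem evalTwo_det_qIntersectionMatrix {ε : LaurentPolynomial ℤ} (hε : ε ^ 2 = 1) :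
    evalTwo (qIntersectionMatrix ε).det = 45 * (2 * evalTwo ε - 1) / 4 := by
  have he : evalTwo ε ^ 2 = 1 := by rw [← map_pow, hε, map_one]
  simp only [qIntersectionMatrix, det_fin_three, of_apply, cons_val', cons_val_zero,
    cons_val_fin_one, cons_val_one, cons_val, map_sub, map_add, map_mul, map_one, map_neg,
    eval₂_T, _root_.zpow_neg, zpow_ofNat, Units.val_mk0, Units.val_pow_eq_pow_val,
    Units.val_inv_eq_inv_val]
  linear_combination (-(189 / 4) - 81 / 2 * evalTwo ε) * he

theorem det_qIntersectionMatrix_ne_zero {ε : LaurentPolynomial ℤ} (hε : ε ^ 2 = 1) :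
    (qIntersectionMatrix ε).det ≠ 0 := by
  have he : evalTwo ε ^ 2 = 1 := by rw [← map_pow, hε, map_one]
  intro hdet
  have hvalue := evalTwo_det_qIntersectionMatrix hε
  rw [hdet, map_zero] at hvalue
  nlinarith

/-- The 3×3 q-intersection matrix `B_q` of Example 1.12 has trivial kernel over
`ℤ[q,q⁻¹]`. -/
theorem stmt19 (n : ℤ)
    (B : Matrix (Fin 3) (Fin 3) (LaurentPolynomial ℤ))
    (hB : B = Matrix.of
      ![![1 - T 1 * sgn n, -(T (-1)) * sgn n - 1 - sgn n * T 1, 1 + T 1 * sgn n + T 2],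
        ![1 + T 1 * sgn n + T 2, 1 - T 1 * sgn n, -1 - T 1 * sgn n - T 2],
        ![-(T (-1)) * sgn n - 1 - sgn n * T 1, 1 + T (-1) * sgn n + T 1 * sgn n,
          1 - T 1 * sgn n]]) :
    ∀ l : Fin 3 → LaurentPolynomial ℤ, l ≠ 0 → B.mulVec l ≠ 0 := by
  have hdet : B.det ≠ 0 := hB ▸ det_qIntersectionMatrix_ne_zero (sgn_sq n)
  exact fun l hl hBl => hl (eq_zero_of_mulVec_eq_zero hdet hBl)
end
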